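/- arXiv:1912.04429 — 2 statements merged into one kernel-verified Lean document; each statement's English description precedes it below -/
import Mathlib

section
/- Normal component of the curl in the adapted orthonormal frame: Let f : ℝ² → ℝ be C² in the variables (x₂,x₃), and define the frame (N, T², T³) as functions of (x₂,x₃) by the explicit formulas below. Then for every C¹ vector field ũ : ℝ³ → ℝ³ and every x ∈ ℝ³: (curl ũ)(x) · N(x₂,x₃) = Σ_{j=1}^{3} [ T²_j ∂_j(ũ·T³)(x) − T³_j ∂_j(ũ·T²)(x) ] − Σ_{ν=2}^{3} [ T²_ν (ũ(x)·∂_ν T³(x₂,x₃)) − T³_ν (ũ(x)·∂_ν T²(x₂,x₃)) ], where (curl ũ)ᵢ = ε_{ijk}∂ⱼũ_k, (ũ·T^ν)(x) = ũ(x)·T^ν(x₂,x₃), and ∂_j = ∂_{x_j}. -/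
noncomputable section

/-- Points of physical space `ℝ³`. -/
abbrev V3 : Type := Fin 3 → ℝ

/-- Spatial partial derivative `∂ⱼ g` of a scalar function on `ℝ³`. -/
def pdS (j : Fin 3) (g : V3 → ℝ) (x : V3) : ℝ :=
  fderiv ℝ g x (Pi.single j 1 : V3)

/-- The curl of a vector field on `ℝ³`: `(curl u)ᵢ = ε_{ijk} ∂ⱼ u_k`. -/
def curlS (u : V3 → V3) (x : V3) : V3 :=
  ![pdS 1 (fun y => u y 2) x - pdS 2 (fun y => u y 1) x,
    pdS 2 (fun y => u y 0) x - pdS 0 (fun y => u y 2) x,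
    pdS 0 (fun y => u y 1) x - pdS 1 (fun y => u y 0) x]

/-- `∂₂ f`, the partial derivative of `f(x₂,x₃)` in its first argument. -/
def f2 (f : ℝ × ℝ → ℝ) (q : ℝ × ℝ) : ℝ := fderiv ℝ f q (1, 0)

/-- `∂₃ f`, the partial derivative of `f(x₂,x₃)` in its second argument. -/
def f3 (f : ℝ × ℝ → ℝ) (q : ℝ × ℝ) : ℝ := fderiv ℝ f q (0, 1)

/-- `J = (1 + (∂₂f)² + (∂₃f)²)^{1/2}`. -/
def Jf (f : ℝ × ℝ → ℝ) (q : ℝ × ℝ) : ℝ :=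
  Real.sqrt (1 + f2 f q ^ 2 + f3 f q ^ 2)

/-- The unit normal `N = J⁻¹(1, −∂₂f, −∂₃f)` of the graph of `f`. -/
def Nf (f : ℝ × ℝ → ℝ) (q : ℝ × ℝ) : V3 :=
  (Jf f q)⁻¹ • ![1, -f2 f q, -f3 f q]

/-- The unit tangent vector `T²`. -/
def T2f (f : ℝ × ℝ → ℝ) (q : ℝ × ℝ) : V3 :=
  ![f2 f q / Jf f q,
    1 - f2 f q ^ 2 / (Jf f q * (Jf f q + 1)),
    -(f2 f q * f3 f q) / (Jf f q * (Jf f q + 1))]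

/-- The unit tangent vector `T³`. -/
def T3f (f : ℝ × ℝ → ℝ) (q : ℝ × ℝ) : V3 :=
  ![f3 f q / Jf f q,
    -(f2 f q * f3 f q) / (Jf f q * (Jf f q + 1)),
    1 - f3 f q ^ 2 / (Jf f q * (Jf f q + 1))]

/-! By the product rule, `T²ⱼ∂ⱼ(ũ·T³) − T³ⱼ∂ⱼ(ũ·T²)` is the contraction `(T²ⱼT³ᵢ − T³ⱼT²ᵢ)∂ⱼũᵢ`
plus the terms in which the frame is differentiated; the frame does not depend on `x₁` (index `0`),
so only `ν = 2, 3` survive among the latter. Contracting `∂ⱼũᵢ` with `aⱼbᵢ − bⱼaᵢ` gives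
`curl ũ · (a × b)`, and `T² × T³ = N`. -/

open Matrix

theorem antisymm_dotProduct_cross {R : Type*} [CommRing R] (D : Fin 3 → Fin 3 → R)
    (a b : Fin 3 → R) :
    ![D 1 2 - D 2 1, D 2 0 - D 0 2, D 0 1 - D 1 0] ⬝ᵥ (a ⨯₃ b) =
      ∑ j, ∑ i, (a j * b i - b j * a i) * D j i := by
  simp only [cross_apply, dotProduct, Fin.sum_univ_three, Fin.isValue, cons_val_zero,
    cons_val_one, cons_val]
  ring

section Frame

variable (f : ℝ × ℝ → ℝ)

theorem Jf_sq (q : ℝ × ℝ) : Jf f q ^ 2 = 1 + f2 f q ^ 2 + f3 f q ^ 2 :=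
  Real.sq_sqrt (by positivity)

theorem Jf_pos (q : ℝ × ℝ) : 0 < Jf f q :=
  Real.sqrt_pos.2 (by positivity)

theorem T2f_cross_T3f (q : ℝ × ℝ) : T2f f q ⨯₃ T3f f q = Nf f q := by
  have hJ := Jf_pos f q
  have hJsq := Jf_sq f q
  ext i
  fin_cases i <;>
    simp only [T2f, T3f, Nf, cross_apply, Pi.smul_apply, smul_eq_mul, Fin.zero_eta, Fin.mk_one,
      Fin.reduceFinMk, Fin.isValue, cons_val_zero, cons_val_one, cons_val, mul_one, mul_neg] <;>
    field_simp
  · linear_combination (Jf f q ^ 2 + Jf f q) * hJsq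
  all_goals ring

theorem contDiff_f2 (hf : ContDiff ℝ 2 f) : ContDiff ℝ 1 (f2 f) :=
  (hf.fderiv_right (by norm_num)).clm_apply contDiff_const

theorem contDiff_f3 (hf : ContDiff ℝ 2 f) : ContDiff ℝ 1 (f3 f) :=
  (hf.fderiv_right (by norm_num)).clm_apply contDiff_const

theorem contDiff_Jf (hf : ContDiff ℝ 2 f) : ContDiff ℝ 1 (Jf f) :=
  ((contDiff_const.add ((contDiff_f2 f hf).pow 2)).add ((contDiff_f3 f hf).pow 2)).sqrt
    fun q => by positivity

theorem differentiable_T2f (hf : ContDiff ℝ 2 f) : Differentiable ℝ (T2f f) := by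
  have := (contDiff_f2 f hf).differentiable one_ne_zero
  have := (contDiff_f3 f hf).differentiable one_ne_zero
  have := (contDiff_Jf f hf).differentiable one_ne_zero
  unfold T2f
  simp only [vecCons, div_eq_mul_inv]
  fun_prop (disch := intro q; have := Jf_pos f q; positivity)

theorem differentiable_T3f (hf : ContDiff ℝ 2 f) : Differentiable ℝ (T3f f) := by
  have := (contDiff_f2 f hf).differentiable one_ne_zero
  have := (contDiff_f3 f hf).differentiable one_ne_zero
  have := (contDiff_Jf f hf).differentiable one_ne_zero
  unfold T3f
  simp only [vecCons, div_eq_mul_inv]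
  fun_prop (disch := intro q; have := Jf_pos f q; positivity)

end Frame

theorem pdS_sum_mul {u v : V3 → V3} {x : V3} (hu : DifferentiableAt ℝ u x)
    (hv : DifferentiableAt ℝ v x) (j : Fin 3) :
    pdS j (fun y => ∑ i, u y i * v y i) x =
      ∑ i, (pdS j (fun y => u y i) x * v x i + u x i * pdS j (fun y => v y i) x) := by
  have hu' := differentiableAt_pi.1 hu
  have hv' := differentiableAt_pi.1 hv
  unfold pdS
  rw [fderiv_fun_sum (A := fun i y => u y i * v y i) fun i _ => (hu' i).mul (hv' i)]
  simp only [fderiv_fun_mul (hu' _) (hv' _), _root_.sum_apply, _root_.add_apply,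
    _root_.smul_apply, smul_eq_mul]
  exact Finset.sum_congr rfl fun i _ => by ring

theorem pdS_zero_comp_coords12 {g : ℝ × ℝ → ℝ} {x : V3} (hg : DifferentiableAt ℝ g (x 1, x 2)) :
    pdS 0 (fun y => g (y 1, y 2)) x = 0 := by
  have hproj := (hasFDerivAt_apply (𝕜 := ℝ) 1 x).prodMk (hasFDerivAt_apply (𝕜 := ℝ) 2 x)
  change fderiv ℝ (g ∘ fun y : V3 => (y 1, y 2)) x _ = 0
  rw [(hg.hasFDerivAt.comp x hproj).fderiv]
  simp only [ContinuousLinearMap.comp_apply, ContinuousLinearMap.prod_apply,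
    ContinuousLinearMap.proj_apply, Pi.single_eq_of_ne (by decide : (1 : Fin 3) ≠ 0),
    Pi.single_eq_of_ne (by decide : (2 : Fin 3) ≠ 0)]
  exact map_zero _

/-- Normal component of the curl in the adapted orthonormal frame `(N, T², T³)`:
`curl ũ · N = T²ⱼ∂ⱼ(ũ·T³) − T³ⱼ∂ⱼ(ũ·T²) − Σ_ν [T²_ν(ũ·∂_νT³) − T³_ν(ũ·∂_νT²)]`. -/
theorem curl_normal_component_in_adapted_frame
    (f : ℝ × ℝ → ℝ) (hf : ContDiff ℝ 2 f)
    (u : V3 → V3) (hu : ContDiff ℝ 1 u)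
    (x : V3) :
    (∑ i : Fin 3, curlS u x i * Nf f (x 1, x 2) i) =
      (∑ j : Fin 3,
        (T2f f (x 1, x 2) j * pdS j (fun y => ∑ i : Fin 3, u y i * T3f f (y 1, y 2) i) x
          - T3f f (x 1, x 2) j * pdS j (fun y => ∑ i : Fin 3, u y i * T2f f (y 1, y 2) i) x))
      - ((T2f f (x 1, x 2) 1 * (∑ i : Fin 3, u x i * pdS 1 (fun y => T3f f (y 1, y 2) i) x)
            + T2f f (x 1, x 2) 2 * (∑ i : Fin 3, u x i * pdS 2 (fun y => T3f f (y 1, y 2) i) x))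
          - (T3f f (x 1, x 2) 1 * (∑ i : Fin 3, u x i * pdS 1 (fun y => T2f f (y 1, y 2) i) x)
            + T3f f (x 1, x 2) 2 * (∑ i : Fin 3, u x i * pdS 2 (fun y => T2f f (y 1, y 2) i) x))) := by
  have hu' : DifferentiableAt ℝ u x := hu.differentiable one_ne_zero x
  have hT2 := differentiable_T2f f hf
  have hT3 := differentiable_T3f f hf
  have hlift {T : ℝ × ℝ → V3} (hT : Differentiable ℝ T) :
      DifferentiableAt ℝ (fun y : V3 => T (y 1, y 2)) x := by fun_prop
  have hx₁ {T : ℝ × ℝ → V3} (hT : Differentiable ℝ T) (i : Fin 3) :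
      pdS 0 (fun y => T (y 1, y 2) i) x = 0 :=
    pdS_zero_comp_coords12 (differentiableAt_pi.1 (hT _) i)
  simp only [pdS_sum_mul hu' (hlift hT2), pdS_sum_mul hu' (hlift hT3)]
  change curlS u x ⬝ᵥ Nf f (x 1, x 2) = _
  rw [← T2f_cross_T3f, curlS, antisymm_dotProduct_cross (fun j i => pdS j (fun y => u y i) x)]
  simp only [Fin.sum_univ_three, hx₁ hT2, hx₁ hT3]
  ring
end
end

section
/- Uniform integral bound along escaping trajectories (the analytic core of Lemma 7.3 of the paper): Let 0 ≤ σ₁ < 1/2 and σ₂ > 2σ₁. Then there exists a constant C = C(σ₁, σ₂), depending only on σ₁ and σ₂, such that for every ε ∈ (0,1] and every s* ∈ ℝ: ∫_{−log ε}^{∞} e^{σ₁ s} [ (1 + |e^{s/2} − e^{s*/2}|)^{−σ₂} + (1 + e^{s/2})^{−σ₂} ] ds ≤ C. Equivalently (after the substitution r = e^{s/2}), for every a ≥ 0: ∫_{1}^{∞} r^{2σ₁ − 1} (1 + |r − a|)^{−σ₂} dr ≤ C. -/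
/-!
With `δ = σ₂ - 2σ₁ > 0`, comparing `r` with `u = 1 + |r - a|` gives
`r^(2σ₁-1) u^(-σ₂) ≤ r^(-1-δ) + u^(-1-δ)`, since the exponent `2σ₁ - 1` is nonpositive and
`-σ₂` is negative. Both terms are integrable, and by translation invariance the integral of the
second is independent of `a`. The substitution `r = e^(s/2)` maps `(-log ε, ∞)` into `(1, ∞)`
and turns each `s`-integral into at most twice such an `r`-integral, with `a = e^(s*/2)` for the
first term and `a = 0` for the second.
-/

open MeasureTheory Real Set
open scoped ENNReal

lemma rpow_mul_rpow_neg_le_add {x u α β : ℝ} (hx : 0 < x) (hu : 0 < u) (hα : α ≤ 0)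
    (hβ : 0 ≤ β) : x ^ α * u ^ (-β) ≤ x ^ (α - β) + u ^ (α - β) := by
  rcases le_total x u with hxu | hux
  · calc x ^ α * u ^ (-β) ≤ x ^ α * x ^ (-β) :=
          mul_le_mul_of_nonneg_left (rpow_le_rpow_of_nonpos hx hxu (neg_nonpos.2 hβ))
            (by positivity)
      _ = x ^ (α - β) := by rw [← rpow_add hx, sub_eq_add_neg]
      _ ≤ _ := le_add_of_nonneg_right (by positivity)
  · calc x ^ α * u ^ (-β) ≤ u ^ α * u ^ (-β) :=
          mul_le_mul_of_nonneg_right (rpow_le_rpow_of_nonpos hu hux hα) (by positivity)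
      _ = u ^ (α - β) := by rw [← rpow_add hu, sub_eq_add_neg]
      _ ≤ _ := le_add_of_nonneg_left (by positivity)

lemma lintegral_Ioi_one_rpow_lt_top {p : ℝ} (hp : p < -1) :
    ∫⁻ r in Ioi 1, ENNReal.ofReal (r ^ p) < ∞ :=
  (integrableOn_Ioi_rpow_of_lt hp one_pos).lintegral_lt_top

lemma lintegral_one_add_abs_rpow_lt_top {p : ℝ} (hp : p < -1) :
    ∫⁻ x : ℝ, ENNReal.ofReal ((1 + |x|) ^ p) < ∞ := by
  have := integrable_one_add_norm (E := ℝ) (μ := volume) (r := -p) (by simp; linarith)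
  simp only [Real.norm_eq_abs, neg_neg] at this
  exact this.lintegral_lt_top

theorem exists_lintegral_Ioi_one_rpow_mul_one_add_abs_sub_rpow_le {α β : ℝ} (hα : α ≤ 0)
    (hβ : 0 ≤ β) (hαβ : α - β < -1) :
    ∃ K < ∞, ∀ a : ℝ,
      ∫⁻ r in Ioi 1, ENNReal.ofReal (r ^ α * (1 + |r - a|) ^ (-β)) ≤ K := by
  refine ⟨(∫⁻ r in Ioi 1, ENNReal.ofReal (r ^ (α - β))) +
      ∫⁻ x : ℝ, ENNReal.ofReal ((1 + |x|) ^ (α - β)),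
    ENNReal.add_lt_top.2 ⟨lintegral_Ioi_one_rpow_lt_top hαβ,
      lintegral_one_add_abs_rpow_lt_top hαβ⟩, fun a => ?_⟩
  have hmeas : Measurable fun r : ℝ => ENNReal.ofReal (r ^ (α - β)) := by fun_prop
  calc ∫⁻ r in Ioi 1, ENNReal.ofReal (r ^ α * (1 + |r - a|) ^ (-β))
      ≤ ∫⁻ r in Ioi 1, (ENNReal.ofReal (r ^ (α - β)) +
          ENNReal.ofReal ((1 + |r - a|) ^ (α - β))) := by
        refine setLIntegral_mono' measurableSet_Ioi fun r (hr : 1 < r) => ?_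
        exact (ENNReal.ofReal_le_ofReal (rpow_mul_rpow_neg_le_add (one_pos.trans hr)
          (by positivity) hα hβ)).trans ENNReal.ofReal_add_le
    _ = (∫⁻ r in Ioi 1, ENNReal.ofReal (r ^ (α - β))) +
          ∫⁻ r in Ioi 1, ENNReal.ofReal ((1 + |r - a|) ^ (α - β)) :=
        lintegral_add_left hmeas _
    _ ≤ (∫⁻ r in Ioi 1, ENNReal.ofReal (r ^ (α - β))) +
          ∫⁻ x : ℝ, ENNReal.ofReal ((1 + |x|) ^ (α - β)) := by
        refine add_le_add le_rfl ((setLIntegral_le_lintegral _ _).trans_eq ?_)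
        exact lintegral_sub_right_eq_self (fun x => ENNReal.ofReal ((1 + |x|) ^ (α - β))) a

lemma lintegral_comp_exp_half_Ioi (g : ℝ → ℝ≥0∞) (L : ℝ) :
    ∫⁻ s in Ioi L, ENNReal.ofReal (exp (s / 2) / 2) * g (exp (s / 2)) =
      ∫⁻ r in Ioi (exp (L / 2)), g r := by
  have himage : (fun s => exp (s / 2)) '' Ioi L = Ioi (exp (L / 2)) := by
    rw [show (fun s => exp (s / 2)) = exp ∘ OrderIso.divRight₀ (2 : ℝ) two_pos from rfl,
      image_comp, OrderIso.image_Ioi, image_exp_Ioi]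
    rfl
  have hderiv : ∀ s ∈ Ioi L,
      HasDerivWithinAt (fun s => exp (s / 2)) (exp (s / 2) / 2) (Ioi L) s := fun s _ => by
    simpa [div_eq_mul_inv] using ((hasDerivAt_id s).div_const 2).exp.hasDerivWithinAt
  have hinj : InjOn (fun s => exp (s / 2)) (Ioi L) := fun x _ y _ hxy => by
    simpa using exp_injective hxy
  rw [← himage, lintegral_image_eq_lintegral_abs_deriv_mul measurableSet_Ioi hderiv hinj]
  refine setLIntegral_congr_fun measurableSet_Ioi fun s _ => ?_
  rw [abs_of_pos (by positivity)]

lemma lintegral_Ioi_exp_mul_comp_exp_half_le (σ : ℝ) {L : ℝ} (hL : 0 ≤ L) (F : ℝ → ℝ) :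
    ∫⁻ s in Ioi L, ENNReal.ofReal (exp (σ * s) * F (exp (s / 2))) ≤
      2 * ∫⁻ r in Ioi 1, ENNReal.ofReal (r ^ (2 * σ - 1) * F r) := by
  have hfactor : ∀ s, exp (σ * s) = exp (s / 2) / 2 * (2 * exp (s / 2) ^ (2 * σ - 1)) := by
    intro s
    rw [← exp_mul, div_mul_eq_mul_div, mul_div_assoc, mul_div_cancel_left₀ _ two_ne_zero,
      ← exp_add]
    ring_nf
  calc ∫⁻ s in Ioi L, ENNReal.ofReal (exp (σ * s) * F (exp (s / 2)))
      = ∫⁻ s in Ioi L, ENNReal.ofReal (exp (s / 2) / 2) *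
          (2 * ENNReal.ofReal (exp (s / 2) ^ (2 * σ - 1) * F (exp (s / 2)))) := by
        refine lintegral_congr fun s => ?_
        rw [hfactor, mul_assoc, mul_assoc, ENNReal.ofReal_mul (by positivity),
          ENNReal.ofReal_mul zero_le_two, ENNReal.ofReal_ofNat]
    _ = ∫⁻ r in Ioi (exp (L / 2)), 2 * ENNReal.ofReal (r ^ (2 * σ - 1) * F r) :=
        lintegral_comp_exp_half_Ioi (fun r => 2 * ENNReal.ofReal (r ^ (2 * σ - 1) * F r)) L
    _ ≤ ∫⁻ r in Ioi 1, 2 * ENNReal.ofReal (r ^ (2 * σ - 1) * F r) :=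
        lintegral_mono_set (Ioi_subset_Ioi (one_le_exp (by positivity)))
    _ = 2 * ∫⁻ r in Ioi 1, ENNReal.ofReal (r ^ (2 * σ - 1) * F r) :=
        lintegral_const_mul' _ _ ENNReal.ofNat_ne_top

/-- Uniform integral bound along escaping trajectories (the analytic core of Lemma 7.3
of the paper): for `0 ≤ σ₁ < 1/2` and `σ₂ > 2σ₁` there is a constant `C = C(σ₁,σ₂)`,
uniform in `ε ∈ (0,1]` and `s* ∈ ℝ` (respectively in `a ≥ 0`), bounding
`∫_{−log ε}^∞ e^{σ₁ s}[(1+|e^{s/2}−e^{s*/2}|)^{−σ₂} + (1+e^{s/2})^{−σ₂}] ds` and,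
equivalently, `∫_1^∞ r^{2σ₁−1}(1+|r−a|)^{−σ₂} dr`. -/
theorem escaping_trajectory_integral_bound
    (σ₁ σ₂ : ℝ) (h1 : 0 ≤ σ₁) (h2 : σ₁ < 1 / 2) (h3 : 2 * σ₁ < σ₂) :
    ∃ C : ℝ,
      (∀ ε : ℝ, 0 < ε → ε ≤ 1 → ∀ sstar : ℝ,
        (∫⁻ s in Set.Ioi (-Real.log ε),
            ENNReal.ofReal (Real.exp (σ₁ * s) *
              ((1 + |Real.exp (s / 2) - Real.exp (sstar / 2)|) ^ (-σ₂)
                + (1 + Real.exp (s / 2)) ^ (-σ₂)))) ≤ ENNReal.ofReal C) ∧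
      (∀ a : ℝ, 0 ≤ a →
        (∫⁻ r in Set.Ioi (1 : ℝ),
            ENNReal.ofReal (r ^ (2 * σ₁ - 1) * (1 + |r - a|) ^ (-σ₂))) ≤
          ENNReal.ofReal C) := by
  obtain ⟨K, hK, hbound⟩ := exists_lintegral_Ioi_one_rpow_mul_one_add_abs_sub_rpow_le
    (α := 2 * σ₁ - 1) (β := σ₂) (by linarith) (by linarith) (by linarith)
  have hsubst : ∀ L, 0 ≤ L → ∀ b, ∫⁻ s in Ioi L,
      ENNReal.ofReal (exp (σ₁ * s) * (1 + |exp (s / 2) - b|) ^ (-σ₂)) ≤ 2 * K := fun L hL b =>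
    (lintegral_Ioi_exp_mul_comp_exp_half_le σ₁ hL fun r => (1 + |r - b|) ^ (-σ₂)).trans
      (by gcongr; exact hbound b)
  have h4K : ENNReal.ofReal (4 * K).toReal = 4 * K :=
    ENNReal.ofReal_toReal (ENNReal.mul_ne_top ENNReal.ofNat_ne_top hK.ne)
  refine ⟨(4 * K).toReal, fun ε hε hε1 sstar => ?_, fun a _ => ?_⟩ <;> rw [h4K]
  · have hL : 0 ≤ -log ε := neg_nonneg.2 (log_nonpos hε.le hε1)
    calc _ ≤ ∫⁻ s in Ioi (-log ε),
          (ENNReal.ofReal (exp (σ₁ * s) * (1 + |exp (s / 2) - exp (sstar / 2)|) ^ (-σ₂)) +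
            ENNReal.ofReal (exp (σ₁ * s) * (1 + |exp (s / 2) - 0|) ^ (-σ₂))) := by
          refine lintegral_mono fun s => ?_
          rw [sub_zero, abs_of_pos (exp_pos _), mul_add]
          exact ENNReal.ofReal_add_le
      _ = _ := lintegral_add_left (by fun_prop) _
      _ ≤ 2 * K + 2 * K := add_le_add (hsubst _ hL _) (hsubst _ hL 0)
      _ = 4 * K := by ring
  · exact (hbound a).trans (le_mul_of_one_le_left' (by norm_num))
end
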